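/- arXiv:1706.06901 — 3 statements merged into one kernel-verified Lean document; each statement's English description precedes it below -/
import Mathlib

section
/- Let D = (V, A) be a finite directed graph, let 𝒟 = (V', A') be a finite directed graph, and let θ : V' → V be a graph homomorphism (θ maps arcs of 𝒟 to arcs of D) such that: θ⁻¹(d) = {d'} for a distinguished vertex d ∈ V, and for every arc (u,v) ∈ A and every v' ∈ θ⁻¹(v) there is exactly one u' ∈ θ⁻¹(u) with (u',v') ∈ A'. Give each arc a' ∈ A' the resource q_{θ(a')} of its image, where resources live in a monoid (M, ⊕) with a compatible partial order ⪯. Suppose for each v' ∈ V' we have b_{v'} ∈ M with b_{v'} ⪯ ⊕_{a'∈Q'} q_{a'} for every v'-d' path Q' in 𝒟. Then for every vertex v ∈ V and every v-d path Q in D, there exists v' ∈ θ⁻¹(v) such that b_{v'} ⪯ ⊕_{a∈Q} q_a. -/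
/-- Directed walks in a digraph given by its arc relation `A`. -/
inductive Walk {V : Type*} (A : V → V → Prop) : V → V → Type _
  | nil (v : V) : Walk A v v
  | cons {u v w : V} (h : A u v) (t : Walk A v w) : Walk A u w

namespace Walk

variable {V : Type*} {A : V → V → Prop} {M : Type*}

/-- The resource of a walk: the `op`-sum (in order) of the resources `q u v` of its
arcs, the empty walk having the neutral resource `e`. -/
def res (op : M → M → M) (e : M) (q : V → V → M) : ∀ {u w : V}, Walk A u w → M
  | _, _, .nil _ => e
  | _, _, @Walk.cons _ _ u v _ _ t => op (q u v) (res op e q t)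

end Walk

/-- Lifting of bounds through a digraph homomorphism `θ : 𝒟 → D` with the
backward-uniqueness property: if `b v'` is a lower bound on the resource of every
`v'`-`d'` path of `𝒟` (arcs of `𝒟` carrying the resources of their images), then for
every `v`-`d` path `Q` of `D` there is `v' ∈ θ⁻¹(v)` with `b v' ⪯ q_Q`. -/
theorem stmt7 {V V' M : Type*} [Fintype V] [Fintype V']
    (A : V → V → Prop) (A' : V' → V' → Prop) (θ : V' → V)
    (hhom : ∀ u' v' : V', A' u' v' → A (θ u') (θ v'))
    (d : V) (d' : V') (hd : ∀ x' : V', θ x' = d ↔ x' = d')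
    (hsurj : ∀ v : V, ∃ v' : V', θ v' = v)
    (hback : ∀ u v : V, A u v → ∀ v' : V', θ v' = v →
      ∃! u' : V', θ u' = u ∧ A' u' v')
    (op : M → M → M) (e : M) (le : M → M → Prop)
    (hassoc : ∀ a b c : M, op (op a b) c = op a (op b c))
    (hneutral : ∀ a : M, op e a = a ∧ op a e = a)
    (hrefl : ∀ a : M, le a a)
    (htrans : ∀ a b c : M, le a b → le b c → le a c)
    (hantisymm : ∀ a b : M, le a b → le b a → a = b)
    (hcompL : ∀ a b c : M, le b c → le (op a b) (op a c))
    (hcompR : ∀ a b c : M, le b c → le (op b a) (op c a))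
    (q : V → V → M) (b : V' → M)
    (hb : ∀ (v' : V') (Q' : Walk A' v' d'),
      le (b v') (Q'.res op e (fun u' w' => q (θ u') (θ w'))))
    (v : V) (Q : Walk A v d) :
    ∃ v' : V', θ v' = v ∧ le (b v') (Q.res op e q) := by
  have key : ∀ (u w : V) (Q : Walk A u w), w = d → ∃ (u' : V') (Q' : Walk A' u' d'),
      θ u' = u ∧ Q'.res op e (fun x' y' => q (θ x') (θ y')) = Q.res op e q := by
    intro u w Q
    induction Q with
    | nil x =>
        rintro rfl
        exact ⟨d', Walk.nil d', (hd d').mpr rfl, rfl⟩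
    | cons h t ih =>
        rintro rfl
        obtain ⟨u', Q', hu', hres⟩ := ih rfl
        obtain ⟨v', ⟨hv', hA'⟩, _⟩ := hback _ _ h u' hu'
        exact ⟨v', Walk.cons hA' Q', hv', by simp [Walk.res, hres, hu', hv']⟩
  obtain ⟨v', Q', hv', hres⟩ := key v d Q rfl
  exact ⟨v', hv', hres ▸ hb v' Q'⟩
end

section
/- Consider the enumeration algorithm on a finite acyclic digraph D with origin o and destination d: a list L of partial paths initially contains the empty path at o; repeatedly a path P ending at some vertex v is extracted from L; if v = d the incumbent upper bound c_od^UB is updated to min(c_od^UB, c(q_P)) when ρ(q_P) = 0; otherwise P is extended along every outgoing arc and the extensions are added to L (possibly some extensions are skipped by the lower-bound test (Low) and/or dominance test (Dom)). Then the algorithm terminates after finitely many iterations, and upon termination c_od^UB equals the minimum of c(q_P) over feasible o-d paths P (ρ(q_P)=0), or +∞ if no feasible o-d path exists. -/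
namespace Walk

variable {V : Type*} {A : V → V → Prop} {M : Type*}

/-- Concatenation of walks. -/
def append : ∀ {u v w : V}, Walk A u v → Walk A v w → Walk A u w
  | _, _, _, .nil _, Q => Q
  | _, _, _, .cons h t, Q => .cons h (append t Q)

/-- The list of arcs (darts) of a walk. -/
def darts : ∀ {u w : V}, Walk A u w → List (V × V)
  | _, _, .nil _ => []
  | _, _, @Walk.cons _ _ u v _ _ t => (u, v) :: darts t

end Walk

/-- A state of the enumeration algorithm: the list `L` of pending partial paths, the
list `kept` of already extended partial paths, and the incumbent upper bound `ub`. -/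
structure AlgState {V : Type*} (A : V → V → Prop) (o : V) where
  L : List (Σ v : V, Walk A o v)
  kept : List (Σ v : V, Walk A o v)
  ub : WithTop ℝ

/-- One iteration of the enumeration algorithm: a partial path `P` ending at `v` is
extracted from `L`; if `v = d` the incumbent is updated to `min ub (c q_P)` when
`ρ q_P = 0`; otherwise `P` is either discarded -- which is allowed only when justified
by the lower-bound test (Low) or the dominance test (Dom) -- or extended along every
outgoing arc. -/
def Step {V M : Type*} (A : V → V → Prop) (o d : V)
    (op : M → M → M) (e : M) (le : M → M → Prop) (q : V → V → M)
    (c : M → ℝ) (ρ : M → ℕ) (B : V → Set M) :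
    AlgState A o → AlgState A o → Prop := fun s s' =>
  (∃ (P : Walk A o d) (L₁ L₂ : List (Σ v : V, Walk A o v)),
      s.L = L₁ ++ ⟨d, P⟩ :: L₂ ∧ s'.L = L₁ ++ L₂ ∧ s'.kept = s.kept ∧
      s'.ub = if ρ (P.res op e q) = 0
        then min s.ub (((c (P.res op e q)) : ℝ) : WithTop ℝ) else s.ub)
  ∨ (∃ (v : V) (P : Walk A o v) (L₁ L₂ : List (Σ v : V, Walk A o v)),
      v ≠ d ∧ s.L = L₁ ++ ⟨v, P⟩ :: L₂ ∧ s'.ub = s.ub ∧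
      ( -- discard `P`, justified by test (Low) or test (Dom)
        (((∀ b ∈ B v, ρ (op (P.res op e q) b) = 1 ∨
             s.ub < (((c (op (P.res op e q) b)) : ℝ) : WithTop ℝ)) ∨
          (∃ k ∈ s.kept, k.1 = v ∧ le (k.2.res op e q) (P.res op e q))) ∧
         s'.L = L₁ ++ L₂ ∧ s'.kept = s.kept)
      ∨ -- extend `P` along every outgoing arc of `v`
        (s'.kept = ⟨v, P⟩ :: s.kept ∧
         ∃ ext : List (Σ v : V, Walk A o v),
           s'.L = L₁ ++ L₂ ++ ext ∧
           (∀ x ∈ ext, ∃ (w : V) (h : A v w),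
              x = ⟨w, P.append (Walk.cons h (Walk.nil w))⟩) ∧
           (∀ (w : V) (h : A v w),
              (⟨w, P.append (Walk.cons h (Walk.nil w))⟩ : Σ v : V, Walk A o v) ∈ ext))))


/-!
Termination: a step replaces one pending path by paths with one more arc, and in an acyclic
digraph every path has fewer than `|V|` arcs, so the multiset of the numbers `|V| - length`
over the pending paths decreases in the Dershowitz–Manna order.

Correctness: every feasible `o`-`d` path `P` stays *covered*: either the incumbent is already
at most `c q_P`, or some pending path `R` has a completion `Q` with `q_R ⊕ q_Q ⪯ q_P`.
Extending `R` keeps the cover through the extension along the first arc of `Q`; (Low) discards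
`R` only when all such completions are infeasible or beaten by the incumbent, by monotonicity of
`ρ` and `c`; (Dom) discards `R` in favour of an already extended path `K`, and every completion
of `K` is covered through strictly shorter completions, which gives an induction on the length
of `Q`. Once `L` is empty, being covered means `ub ≤ c q_P`, and `ub` is always `⊤` or the cost
of some feasible path.
-/

structure IsMonoidOp {M : Type*} (op : M → M → M) (e : M) : Prop where
  assoc : ∀ a b c : M, op (op a b) c = op a (op b c)
  one_op : ∀ a : M, op e a = a
  op_one : ∀ a : M, op a e = a

structure IsPreorderedMonoidOp {M : Type*} (op : M → M → M) (e : M) (le : M → M → Prop) :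
    Prop extends IsMonoidOp op e where
  refl : ∀ a : M, le a a
  trans : ∀ a b c : M, le a b → le b c → le a c
  op_le_op_left : ∀ a b c : M, le b c → le (op a b) (op a c)
  op_le_op_right : ∀ a b c : M, le b c → le (op b a) (op c a)

def IsAcyclic {V : Type*} (A : V → V → Prop) : Prop :=
  ∀ (v : V) (W : Walk A v v), W.darts = []

namespace Walk

variable {V M : Type*} {A : V → V → Prop}

theorem res_append {op : M → M → M} {e : M} (hM : IsMonoidOp op e) (q : V → V → M) :
    ∀ {u v w : V} (P : Walk A u v) (Q : Walk A v w),
      (P.append Q).res op e q = op (P.res op e q) (Q.res op e q)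
  | _, _, _, .nil _, _ => (hM.one_op _).symm
  | _, _, _, .cons _ t, Q => by rw [append, res, res, res_append hM q t Q, hM.assoc]

theorem res_append_arc {op : M → M → M} {e : M} (hM : IsMonoidOp op e) (q : V → V → M)
    {u v w x : V} (P : Walk A u v) (h : A v w) (Q : Walk A w x) :
    op ((P.append (cons h (nil w))).res op e q) (Q.res op e q) =
      op (P.res op e q) ((cons h Q).res op e q) := by
  rw [res_append hM, res, res, res, hM.op_one, hM.assoc]

theorem darts_append : ∀ {u v w : V} (P : Walk A u v) (Q : Walk A v w),
    (P.append Q).darts = P.darts ++ Q.darts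
  | _, _, _, .nil _, _ => rfl
  | _, _, _, .cons _ t, Q => by rw [append, darts, darts, darts_append t Q, List.cons_append]

theorem length_darts_append_arc {u v w : V} (P : Walk A u v) (h : A v w) :
    (P.append (cons h (nil w))).darts.length = P.darts.length + 1 := by
  simp [darts_append, darts]

theorem exists_eq_cons_of_ne {u w : V} (Q : Walk A u w) (huw : u ≠ w) :
    ∃ (v : V) (h : A u v) (Q' : Walk A v w), Q = cons h Q' := by
  cases Q with
  | nil => exact absurd rfl huw
  | cons h Q' => exact ⟨_, h, Q', rfl⟩

theorem eq_nil_of_isAcyclic (hA : IsAcyclic A) {v : V} (W : Walk A v v) : W = nil v := by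
  cases W with
  | nil => rfl
  | cons h t => simpa [darts] using hA _ (cons h t)

def support : ∀ {u w : V}, Walk A u w → List V
  | _, _, .nil v => [v]
  | _, _, @cons _ _ u _ _ _ t => u :: support t

theorem length_support : ∀ {u w : V} (W : Walk A u w), W.support.length = W.darts.length + 1
  | _, _, .nil _ => rfl
  | _, _, .cons _ t => by rw [support, darts, List.length_cons, List.length_cons, length_support t]

theorem exists_eq_append_of_mem_support : ∀ {v w : V} (W : Walk A v w) {u : V},
    u ∈ W.support → ∃ (W₁ : Walk A v u) (W₂ : Walk A u w), W = W₁.append W₂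
  | _, _, .nil _, _, hu => by
      obtain rfl := List.mem_singleton.1 hu
      exact ⟨nil _, nil _, rfl⟩
  | _, _, .cons h t, _, hu => by
      rcases List.mem_cons.1 hu with rfl | hu
      · exact ⟨nil _, cons h t, rfl⟩
      · obtain ⟨W₁, W₂, rfl⟩ := exists_eq_append_of_mem_support t hu
        exact ⟨cons h W₁, W₂, rfl⟩

theorem support_nodup (hA : IsAcyclic A) : ∀ {u w : V} (W : Walk A u w), W.support.Nodup
  | _, _, .nil _ => List.nodup_singleton _
  | _, _, .cons h t => by
      refine List.nodup_cons.2 ⟨fun hmem => ?_, support_nodup hA t⟩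
      obtain ⟨t₁, -, -⟩ := exists_eq_append_of_mem_support t hmem
      simpa [darts] using hA _ (cons h t₁)

theorem length_darts_lt_card [Fintype V] (hA : IsAcyclic A) {u w : V} (W : Walk A u w) :
    W.darts.length < Fintype.card V := by
  have := (support_nodup hA W).length_le_card
  rw [length_support] at this
  omega

end Walk

namespace AlgState

variable {V M : Type*} {A : V → V → Prop} {op : M → M → M} {e : M} {le : M → M → Prop}
  {q : V → V → M} {c : M → ℝ} {ρ : M → ℕ} {o d : V} {B : V → Set M}

def weights [Fintype V] (s : AlgState A o) : Multiset ℕ :=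
  (s.L.map fun x => Fintype.card V - x.2.darts.length : List ℕ)

theorem exists_split_of_step {s s' : AlgState A o} (hstep : Step A o d op e le q c ρ B s s') :
    ∃ (x : Σ v : V, Walk A o v) (L₁ L₂ ext : List (Σ v : V, Walk A o v)),
      s.L = L₁ ++ x :: L₂ ∧ s'.L = L₁ ++ L₂ ++ ext ∧
      ∀ y ∈ ext, y.2.darts.length = x.2.darts.length + 1 := by
  rcases hstep with ⟨P, L₁, L₂, hsL, hL', -⟩ |
    ⟨v, P, L₁, L₂, -, hsL, -, ⟨-, hL', -⟩ | ⟨-, ext, hL', hext, -⟩⟩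
  · exact ⟨_, L₁, L₂, [], hsL, by rw [hL', List.append_nil], by simp⟩
  · exact ⟨_, L₁, L₂, [], hsL, by rw [hL', List.append_nil], by simp⟩
  · refine ⟨_, L₁, L₂, ext, hsL, hL', fun y hy => ?_⟩
    obtain ⟨w, h, rfl⟩ := hext y hy
    exact Walk.length_darts_append_arc P h

theorem weights_lt_of_step [Fintype V] (hA : IsAcyclic A) {s s' : AlgState A o}
    (hstep : Step A o d op e le q c ρ B s s') :
    Multiset.IsDershowitzMannaLT s'.weights s.weights := by
  obtain ⟨x, L₁, L₂, ext, hsL, hL', hext⟩ := exists_split_of_step hstep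
  have hx := Walk.length_darts_lt_card hA x.2
  refine ⟨↑((L₁ ++ L₂).map fun x => Fintype.card V - x.2.darts.length),
    ↑(ext.map fun x => Fintype.card V - x.2.darts.length),
    {Fintype.card V - x.2.darts.length}, by simp, ?_, ?_, ?_⟩
  · simp [weights, hL']
  · rw [weights, hsL, List.map_append, List.map_cons, Multiset.coe_eq_coe.2 List.perm_middle,
      ← Multiset.cons_coe, ← Multiset.singleton_add, add_comm, List.map_append]
  · simp only [Multiset.mem_coe, List.mem_map, Multiset.mem_singleton, exists_eq_left]
    rintro _ ⟨y, hy, rfl⟩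
    rw [hext y hy]
    omega

theorem wellFounded_flip_step [Fintype V] (hA : IsAcyclic A) :
    WellFounded (flip (Step A o d op e le q c ρ B)) :=
  Subrelation.wf (weights_lt_of_step hA)
    (InvImage.wf weights Multiset.wellFounded_isDershowitzMannaLT)

end AlgState

def Covered {V M : Type*} {A : V → V → Prop} {o : V} (op : M → M → M) (e : M)
    (le : M → M → Prop) (q : V → V → M) (c : M → ℝ) (d : V) (s : AlgState A o) (m : M)
    (n : ℕ) : Prop :=
  s.ub ≤ ((c m : ℝ) : WithTop ℝ) ∨
    ∃ x ∈ s.L, ∃ Q : Walk A x.1 d, Q.darts.length ≤ n ∧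
      le (op (x.2.res op e q) (Q.res op e q)) m

/-- The invariant that makes discarding by (Dom) sound. -/
def KeptCovered {V M : Type*} {A : V → V → Prop} {o : V} (op : M → M → M) (e : M)
    (le : M → M → Prop) (q : V → V → M) (c : M → ℝ) (ρ : M → ℕ) (d : V)
    (s : AlgState A o) : Prop :=
  ∀ k ∈ s.kept, k.1 ≠ d ∧ ∀ Q : Walk A k.1 d,
    ρ (op (k.2.res op e q) (Q.res op e q)) = 0 →
    ∃ n < Q.darts.length, Covered op e le q c d s (op (k.2.res op e q) (Q.res op e q)) n

def UbAttained {V M : Type*} {A : V → V → Prop} {o : V} (op : M → M → M) (e : M)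
    (q : V → V → M) (c : M → ℝ) (ρ : M → ℕ) (d : V) (s : AlgState A o) : Prop :=
  s.ub = ⊤ ∨
    ∃ P : Walk A o d, ρ (P.res op e q) = 0 ∧ s.ub = ((c (P.res op e q) : ℝ) : WithTop ℝ)

section Correctness

variable {V M : Type*} {A : V → V → Prop} {op : M → M → M} {e : M} {le : M → M → Prop}
  {q : V → V → M} {c : M → ℝ} {ρ : M → ℕ} {o d : V} {B : V → Set M}

namespace Covered

theorem mono_depth {s : AlgState A o} {m : M} {n n' : ℕ} (h : Covered op e le q c d s m n)
    (hn : n ≤ n') : Covered op e le q c d s m n' := by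
  rcases h with h | ⟨x, hx, Q, hQ, hle⟩
  · exact Or.inl h
  · exact Or.inr ⟨x, hx, Q, hQ.trans hn, hle⟩

theorem mono (hM : IsPreorderedMonoidOp op e le) (hc : ∀ a b : M, le a b → c a ≤ c b)
    {s : AlgState A o} {m m' : M} {n : ℕ} (h : Covered op e le q c d s m n) (hm : le m m') :
    Covered op e le q c d s m' n := by
  rcases h with h | ⟨x, hx, Q, hQ, hle⟩
  · exact Or.inl (h.trans (WithTop.coe_le_coe.2 (hc m m' hm)))
  · exact Or.inr ⟨x, hx, Q, hQ, hM.trans _ _ _ hle hm⟩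

theorem ub_le_of_L_eq_nil {s : AlgState A o} {m : M} {n : ℕ}
    (h : Covered op e le q c d s m n) (hL : s.L = []) : s.ub ≤ ((c m : ℝ) : WithTop ℝ) :=
  h.resolve_right fun ⟨_, hx, _⟩ => by simp [hL] at hx

theorem of_extract {s s' : AlgState A o} {x : Σ v : V, Walk A o v}
    {L₁ L₂ : List (Σ v : V, Walk A o v)} {m : M} {n : ℕ} (hsL : s.L = L₁ ++ x :: L₂)
    (hL : ∀ y ∈ L₁ ++ L₂, y ∈ s'.L) (hub : s'.ub ≤ s.ub)
    (hx : ∀ Q : Walk A x.1 d, Q.darts.length ≤ n →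
      le (op (x.2.res op e q) (Q.res op e q)) m → Covered op e le q c d s' m n)
    (h : Covered op e le q c d s m n) : Covered op e le q c d s' m n := by
  rcases h with h | ⟨y, hy, Q, hQ, hle⟩
  · exact Or.inl (hub.trans h)
  · rw [hsL, List.mem_append, List.mem_cons, or_left_comm] at hy
    rcases hy with rfl | hy
    · exact hx Q hQ hle
    · exact Or.inr ⟨y, hL y (List.mem_append.2 hy), Q, hQ, hle⟩

end Covered

theorem ub_le_of_extract_dest (hM : IsMonoidOp op e) (hA : IsAcyclic A)
    (hc : ∀ a b : M, le a b → c a ≤ c b) (hρ : ∀ a b : M, le a b → ρ a ≤ ρ b) {m : M}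
    (hm : ρ m = 0) {ub ub' : WithTop ℝ} {P : Walk A o d}
    (hub : ub' = if ρ (P.res op e q) = 0
      then min ub ((c (P.res op e q) : ℝ) : WithTop ℝ) else ub)
    (Q : Walk A d d) (hle : le (op (P.res op e q) (Q.res op e q)) m) :
    ub' ≤ ((c m : ℝ) : WithTop ℝ) := by
  rw [Walk.eq_nil_of_isAcyclic hA Q, Walk.res, hM.op_one] at hle
  have hP : ρ (P.res op e q) = 0 := Nat.eq_zero_of_le_zero (hm ▸ hρ _ _ hle)
  rw [hub, if_pos hP]
  exact (min_le_right _ _).trans (WithTop.coe_le_coe.2 (hc _ _ hle))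

theorem ub_le_of_low (hM : IsPreorderedMonoidOp op e le) (hc : ∀ a b : M, le a b → c a ≤ c b)
    (hρ : ∀ a b : M, le a b → ρ a ≤ ρ b)
    (hB : ∀ (v : V) (Q : Walk A v d), ∃ b ∈ B v, le b (Q.res op e q)) {m : M} (hm : ρ m = 0)
    {ub : WithTop ℝ} {v : V} {P : Walk A o v}
    (hlow : ∀ b ∈ B v, ρ (op (P.res op e q) b) = 1 ∨
      ub < ((c (op (P.res op e q) b) : ℝ) : WithTop ℝ))
    (Q : Walk A v d) (hle : le (op (P.res op e q) (Q.res op e q)) m) :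
    ub ≤ ((c m : ℝ) : WithTop ℝ) := by
  obtain ⟨b, hb, hbQ⟩ := hB v Q
  have hbm : le (op (P.res op e q) b) m := hM.trans _ _ _ (hM.op_le_op_left _ _ _ hbQ) hle
  rcases hlow b hb with hinf | hlt
  · have := hρ _ _ hbm
    omega
  · exact (hlt.trans_le (WithTop.coe_le_coe.2 (hc _ _ hbm))).le

theorem exists_extension_of_ne (hM : IsMonoidOp op e) {v : V} (hvd : v ≠ d) {P : Walk A o v}
    {L : List (Σ v : V, Walk A o v)}
    (hext : ∀ (w : V) (h : A v w), ⟨w, P.append (Walk.cons h (Walk.nil w))⟩ ∈ L)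
    (Q : Walk A v d) :
    ∃ y ∈ L, ∃ Q' : Walk A y.1 d, Q'.darts.length + 1 = Q.darts.length ∧
      op (y.2.res op e q) (Q'.res op e q) = op (P.res op e q) (Q.res op e q) := by
  obtain ⟨w, h, Q', rfl⟩ := Q.exists_eq_cons_of_ne hvd
  exact ⟨_, hext w h, Q', rfl, Walk.res_append_arc hM q P h Q'⟩

theorem Covered.step (hM : IsPreorderedMonoidOp op e le) (hA : IsAcyclic A)
    (hc : ∀ a b : M, le a b → c a ≤ c b) (hρ : ∀ a b : M, le a b → ρ a ≤ ρ b)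
    (hB : ∀ (v : V) (Q : Walk A v d), ∃ b ∈ B v, le b (Q.res op e q))
    {s s' : AlgState A o} (hstep : Step A o d op e le q c ρ B s s')
    (hK : KeptCovered op e le q c ρ d s) {m : M} (hm : ρ m = 0) (n : ℕ)
    (h : Covered op e le q c d s m n) : Covered op e le q c d s' m n := by
  induction n using Nat.strong_induction_on with
  | _ n ih =>
  rcases hstep with ⟨P, L₁, L₂, hsL, hL', -, hub⟩ |
    ⟨v, P, L₁, L₂, hvd, hsL, hub, ⟨hjust, hL', -⟩ | ⟨-, ext, hL', -, hext⟩⟩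
  · have hub_le : s'.ub ≤ s.ub := by
      rw [hub]; split_ifs <;> simp
    exact h.of_extract hsL (fun y hy => hL' ▸ hy) hub_le fun Q _ hle =>
      Or.inl (ub_le_of_extract_dest hM.toIsMonoidOp hA hc hρ hm hub Q hle)
  · refine h.of_extract hsL (fun y hy => hL' ▸ hy) hub.le fun Q hQ hle => ?_
    rcases hjust with hlow | ⟨⟨_, K⟩, hK', rfl, hKP⟩
    · exact Or.inl (hub ▸ ub_le_of_low hM hc hρ hB hm hlow Q hle)
    · -- `K` was extended, so its completion along `Q` is covered at a smaller depth
      have hKm : le (op (K.res op e q) (Q.res op e q)) m :=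
        hM.trans _ _ _ (hM.op_le_op_right _ _ _ hKP) hle
      obtain ⟨n', hn', hcov⟩ :=
        (hK _ hK').2 Q (Nat.eq_zero_of_le_zero (hm ▸ hρ _ _ hKm))
      exact (ih n' (by omega) (hcov.mono hM hc hKm)).mono_depth (by omega)
  · refine h.of_extract hsL (fun y hy => hL' ▸ List.mem_append_left _ hy) hub.le
      fun Q hQ hle => ?_
    obtain ⟨y, hy, Q', hlen, hres⟩ :=
      exists_extension_of_ne hM.toIsMonoidOp hvd
        (fun w h => hL' ▸ List.mem_append_right _ (hext w h)) Q
    exact Or.inr ⟨y, hy, Q', by omega, hres ▸ hle⟩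

theorem KeptCovered.step (hM : IsPreorderedMonoidOp op e le) (hA : IsAcyclic A)
    (hc : ∀ a b : M, le a b → c a ≤ c b) (hρ : ∀ a b : M, le a b → ρ a ≤ ρ b)
    (hB : ∀ (v : V) (Q : Walk A v d), ∃ b ∈ B v, le b (Q.res op e q))
    {s s' : AlgState A o} (hstep : Step A o d op e le q c ρ B s s')
    (hK : KeptCovered op e le q c ρ d s) : KeptCovered op e le q c ρ d s' := by
  have hold : ∀ k ∈ s.kept, k.1 ≠ d ∧ ∀ Q : Walk A k.1 d,
      ρ (op (k.2.res op e q) (Q.res op e q)) = 0 → ∃ n < Q.darts.length,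
        Covered op e le q c d s' (op (k.2.res op e q) (Q.res op e q)) n := fun k hk =>
    (hK k hk).imp_right fun hQ Q hρQ => (hQ Q hρQ).imp fun n => And.imp_right
      (Covered.step hM hA hc hρ hB hstep hK hρQ n)
  intro k hk
  rcases hstep with ⟨_, _, _, _, _, hkept, _⟩ |
    ⟨v, P, _, _, hvd, _, _, ⟨_, _, hkept⟩ | ⟨hkept, ext, hL', _, hext⟩⟩
  · exact hold k (hkept ▸ hk)
  · exact hold k (hkept ▸ hk)
  · rcases List.mem_cons.1 (hkept ▸ hk) with rfl | hk'
    · refine ⟨hvd, fun Q _ => ?_⟩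
      obtain ⟨y, hy, Q', hlen, hres⟩ := exists_extension_of_ne hM.toIsMonoidOp hvd
        (fun w h => hL' ▸ List.mem_append_right _ (hext w h)) Q
      exact ⟨Q'.darts.length, by omega, Or.inr ⟨y, hy, Q', le_rfl, hres ▸ hM.refl _⟩⟩
    · exact hold k hk'

theorem UbAttained.step {s s' : AlgState A o} (hstep : Step A o d op e le q c ρ B s s')
    (h : UbAttained op e q c ρ d s) : UbAttained op e q c ρ d s' := by
  rcases hstep with ⟨P, -, -, -, -, -, hub⟩ | ⟨-, -, -, -, -, -, hub, -⟩
  · rw [UbAttained, hub]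
    split_ifs with hP
    · rcases min_choice s.ub ((c (P.res op e q) : ℝ) : WithTop ℝ) with hmin | hmin <;>
        rw [hmin]
      · exact h
      · exact Or.inr ⟨P, hP, rfl⟩
    · exact h
  · rwa [UbAttained, hub]

theorem invariant_of_reachable (hM : IsPreorderedMonoidOp op e le) (hA : IsAcyclic A)
    (hc : ∀ a b : M, le a b → c a ≤ c b) (hρ : ∀ a b : M, le a b → ρ a ≤ ρ b)
    (hB : ∀ (v : V) (Q : Walk A v d), ∃ b ∈ B v, le b (Q.res op e q)) {s : AlgState A o}
    (hs : Relation.ReflTransGen (Step A o d op e le q c ρ B)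
      ⟨[⟨o, Walk.nil o⟩], [], ⊤⟩ s) :
    KeptCovered op e le q c ρ d s ∧
      (∀ P : Walk A o d, ρ (P.res op e q) = 0 →
        ∃ n, Covered op e le q c d s (P.res op e q) n) ∧
      UbAttained op e q c ρ d s := by
  induction hs with
  | refl =>
    refine ⟨fun _ hk => absurd hk List.not_mem_nil, fun P _ => ⟨_, Or.inr ⟨_,
      List.mem_singleton_self _, P, le_rfl, ?_⟩⟩, Or.inl rfl⟩
    rw [Walk.res, hM.one_op]
    exact hM.refl _
  | tail _ hstep ih =>
    obtain ⟨hK, hfeas, hub⟩ := ih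
    exact ⟨hK.step hM hA hc hρ hB hstep, fun P hP => (hfeas P hP).imp
      (Covered.step hM hA hc hρ hB hstep hK hP), hub.step hstep⟩

end Correctness

theorem stmt9_general {V M : Type*} [Fintype V] (A : V → V → Prop)
    (hacyclic : ∀ (v : V) (W : Walk A v v), W.darts = [])
    (op : M → M → M) (e : M) (le : M → M → Prop)
    (hassoc : ∀ a b c : M, op (op a b) c = op a (op b c))
    (hneutral : ∀ a : M, op e a = a ∧ op a e = a)
    (hrefl : ∀ a : M, le a a)
    (htrans : ∀ a b c : M, le a b → le b c → le a c)
    (hcompL : ∀ a b c : M, le b c → le (op a b) (op a c))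
    (hcompR : ∀ a b c : M, le b c → le (op b a) (op c a))
    (q : V → V → M)
    (c : M → ℝ) (hc : ∀ a b : M, le a b → c a ≤ c b)
    (ρ : M → ℕ)
    (hρmono : ∀ a b : M, le a b → ρ a ≤ ρ b)
    (o d : V) (B : V → Set M)
    (hB : ∀ (v : V) (Q : Walk A v d), ∃ b ∈ B v, le b (Q.res op e q))
    (init : AlgState A o)
    (hinit : init = ⟨[⟨o, Walk.nil o⟩], [], ⊤⟩) :
    (¬ ∃ f : ℕ → AlgState A o, f 0 = init ∧
        ∀ n : ℕ, Step A o d op e le q c ρ B (f n) (f (n + 1))) ∧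
    (∀ s : AlgState A o,
      Relation.ReflTransGen (Step A o d op e le q c ρ B) init s → s.L = [] →
        (∀ P : Walk A o d, ρ (P.res op e q) = 0 →
            s.ub ≤ (((c (P.res op e q)) : ℝ) : WithTop ℝ)) ∧
        ((¬ ∃ P : Walk A o d, ρ (P.res op e q) = 0) → s.ub = ⊤) ∧
        ((∃ P : Walk A o d, ρ (P.res op e q) = 0) →
          ∃ P : Walk A o d, ρ (P.res op e q) = 0 ∧
            s.ub = (((c (P.res op e q)) : ℝ) : WithTop ℝ))) := by
  have hM : IsPreorderedMonoidOp op e le :=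
    ⟨⟨hassoc, fun a => (hneutral a).1, fun a => (hneutral a).2⟩,
      hrefl, htrans, hcompL, hcompR⟩
  subst hinit
  refine ⟨fun ⟨f, _, hf⟩ => (wellFounded_iff_isEmpty_descending_chain.1
    (AlgState.wellFounded_flip_step hacyclic)).false ⟨f, hf⟩, fun s hs hL => ?_⟩
  obtain ⟨-, hfeas, hub⟩ := invariant_of_reachable hM hacyclic hc hρmono hB hs
  have hle : ∀ P : Walk A o d, ρ (P.res op e q) = 0 →
      s.ub ≤ ((c (P.res op e q) : ℝ) : WithTop ℝ) := fun P hP =>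
    (hfeas P hP).elim fun _ h => h.ub_le_of_L_eq_nil hL
  refine ⟨hle, fun hno => hub.resolve_right fun ⟨P, hP, _⟩ => hno ⟨P, hP⟩,
    fun ⟨P, hP⟩ => hub.resolve_left fun htop => ?_⟩
  exact WithTop.not_top_le_coe _ (htop ▸ hle P hP)

/-- On a finite acyclic digraph, the enumeration algorithm with the (Low) and (Dom)
tests terminates after finitely many iterations, and upon termination the incumbent
`ub` equals the minimum cost of a feasible `o`-`d` path, or `+∞` if none exists. -/
theorem stmt9 {V M : Type*} [Fintype V] (A : V → V → Prop)
    (hacyclic : ∀ (v : V) (W : Walk A v v), W.darts = [])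
    (op : M → M → M) (e : M) (le : M → M → Prop)
    (hassoc : ∀ a b c : M, op (op a b) c = op a (op b c))
    (hneutral : ∀ a : M, op e a = a ∧ op a e = a)
    (hrefl : ∀ a : M, le a a)
    (htrans : ∀ a b c : M, le a b → le b c → le a c)
    (hantisymm : ∀ a b : M, le a b → le b a → a = b)
    (hcompL : ∀ a b c : M, le b c → le (op a b) (op a c))
    (hcompR : ∀ a b c : M, le b c → le (op b a) (op c a))
    (q : V → V → M)
    (c : M → ℝ) (hc : ∀ a b : M, le a b → c a ≤ c b)
    (ρ : M → ℕ) (hρ01 : ∀ a : M, ρ a = 0 ∨ ρ a = 1)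
    (hρmono : ∀ a b : M, le a b → ρ a ≤ ρ b)
    (o d : V) (B : V → Set M)
    (hB : ∀ (v : V) (Q : Walk A v d), ∃ b ∈ B v, le b (Q.res op e q))
    (init : AlgState A o)
    (hinit : init = ⟨[⟨o, Walk.nil o⟩], [], ⊤⟩) :
    (¬ ∃ f : ℕ → AlgState A o, f 0 = init ∧
        ∀ n : ℕ, Step A o d op e le q c ρ B (f n) (f (n + 1))) ∧
    (∀ s : AlgState A o,
      Relation.ReflTransGen (Step A o d op e le q c ρ B) init s → s.L = [] →
        (∀ P : Walk A o d, ρ (P.res op e q) = 0 →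
            s.ub ≤ (((c (P.res op e q)) : ℝ) : WithTop ℝ)) ∧
        ((¬ ∃ P : Walk A o d, ρ (P.res op e q) = 0) → s.ub = ⊤) ∧
        ((∃ P : Walk A o d, ρ (P.res op e q) = 0) →
          ∃ P : Walk A o d, ρ (P.res op e q) = 0 ∧
            s.ub = (((c (P.res op e q)) : ℝ) : WithTop ℝ))) :=
  stmt9_general A hacyclic op e le hassoc hneutral hrefl htrans hcompL hcompR q c hc ρ hρmono o d B
    hB init hinit
end

section
/- Let (M, ⊕, ⪯) be a monoid with compatible partial order, c : M → ℝ non-decreasing, ρ : M → {0,1} non-decreasing. Fix a vertex v, a set B_v ⊆ M such that every v-d path Q satisfies b ⪯ q_Q for some b ∈ B_v, and a partial o-v path P with resource q_P. Define key(P) = min{ c(q_P ⊕ b) : b ∈ B_v, ρ(q_P ⊕ b) = 0 } (min over the empty set being +∞). Then for every feasible o-d path of the form P + Q (Q a v-d path with ρ(q_P ⊕ q_Q) = 0), we have key(P) ≤ c(q_P ⊕ q_Q). -/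
section CompletionKey

variable {M : Type*} (op : M → M → M) (c : M → ℝ) (ρ : M → ℕ)

/-- `key(x) = min { c (x ⊕ b) : b ∈ B, ρ (x ⊕ b) = 0 }`, with `⊤` as the empty minimum. -/
def completionKey (B : Finset M) (x : M) : WithTop ℝ :=
  (B.filter fun b => ρ (op x b) = 0).inf fun b => ((c (op x b) : ℝ) : WithTop ℝ)

theorem completionKey_le_cost {le : M → M → Prop}
    (hcompL : ∀ a b c : M, le b c → le (op a b) (op a c))
    (hc : ∀ a b : M, le a b → c a ≤ c b) (hρmono : ∀ a b : M, le a b → ρ a ≤ ρ b)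
    {B : Finset M} {x y : M} (hB : ∃ b ∈ B, le b y) (hfeas : ρ (op x y) = 0) :
    completionKey op c ρ B x ≤ ((c (op x y) : ℝ) : WithTop ℝ) := by
  obtain ⟨b, hbB, hby⟩ := hB
  have hle : le (op x b) (op x y) := hcompL x b y hby
  have hb_feas : ρ (op x b) = 0 := Nat.le_zero.mp (hfeas ▸ hρmono _ _ hle)
  calc completionKey op c ρ B x ≤ ((c (op x b) : ℝ) : WithTop ℝ) :=
        Finset.inf_le (Finset.mem_filter.mpr ⟨hbB, hb_feas⟩)
    _ ≤ ((c (op x y) : ℝ) : WithTop ℝ) := WithTop.coe_le_coe.mpr (hc _ _ hle)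

end CompletionKey

theorem stmt15_general {V M : Type*} (A : V → V → Prop)
    (op : M → M → M) (e : M) (le : M → M → Prop)
    (hcompL : ∀ a b c : M, le b c → le (op a b) (op a c))
    (q : V → V → M)
    (c : M → ℝ) (hc : ∀ a b : M, le a b → c a ≤ c b)
    (ρ : M → ℕ)
    (hρmono : ∀ a b : M, le a b → ρ a ≤ ρ b)
    (o v d : V) (B : Finset M)
    (hB : ∀ Q : Walk A v d, ∃ b ∈ B, le b (Q.res op e q))
    (P : Walk A o v)
    (key : WithTop ℝ)
    (hkey : key = (B.filter fun b => ρ (op (P.res op e q) b) = 0).inf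
      (fun b => ((c (op (P.res op e q) b) : ℝ) : WithTop ℝ)))
    (Q : Walk A v d)
    (hfeas : ρ (op (P.res op e q) (Q.res op e q)) = 0) :
    key ≤ ((c (op (P.res op e q) (Q.res op e q)) : ℝ) : WithTop ℝ) := by
  subst hkey
  exact completionKey_le_cost op c ρ hcompL hc hρmono (hB Q) hfeas

/-- The key `key(P) = min { c (q_P ⊕ b) : b ∈ B_v, ρ (q_P ⊕ b) = 0 }` (the minimum over
the empty set being `+∞`) is a lower bound on the cost of every feasible completion
`P + Q` of the partial path `P`. -/
theorem stmt15 {V M : Type*} (A : V → V → Prop)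
    (op : M → M → M) (e : M) (le : M → M → Prop)
    (hassoc : ∀ a b c : M, op (op a b) c = op a (op b c))
    (hneutral : ∀ a : M, op e a = a ∧ op a e = a)
    (hrefl : ∀ a : M, le a a)
    (htrans : ∀ a b c : M, le a b → le b c → le a c)
    (hantisymm : ∀ a b : M, le a b → le b a → a = b)
    (hcompL : ∀ a b c : M, le b c → le (op a b) (op a c))
    (hcompR : ∀ a b c : M, le b c → le (op b a) (op c a))
    (q : V → V → M)
    (c : M → ℝ) (hc : ∀ a b : M, le a b → c a ≤ c b)
    (ρ : M → ℕ) (hρ01 : ∀ a : M, ρ a = 0 ∨ ρ a = 1)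
    (hρmono : ∀ a b : M, le a b → ρ a ≤ ρ b)
    (o v d : V) (B : Finset M)
    (hB : ∀ Q : Walk A v d, ∃ b ∈ B, le b (Q.res op e q))
    (P : Walk A o v)
    (key : WithTop ℝ)
    (hkey : key = (B.filter fun b => ρ (op (P.res op e q) b) = 0).inf
      (fun b => ((c (op (P.res op e q) b) : ℝ) : WithTop ℝ)))
    (Q : Walk A v d)
    (hfeas : ρ (op (P.res op e q) (Q.res op e q)) = 0) :
    key ≤ ((c (op (P.res op e q) (Q.res op e q)) : ℝ) : WithTop ℝ) :=
  stmt15_general A op e le hcompL q c hc ρ hρmono o v d B hB P key hkey Q hfeas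
end
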